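/- Let G : X → ℝ^d and a Borel probability measure μ on a separable Banach space X satisfy Assumption A(L₁, L₂, x₀, R, L₃), set Φ(x,y) = ½‖G(x)-y‖_Γ², Z(y) = ∫_X exp(-Φ(x,y)) μ(dx), and let π be the evidence density. Let p > 1 and assume L₁² < L₂/(p(p-1)). Then ∫_{ℝ^d} ∫_X |exp(-Φ(x,y))/Z(y)|^p μ(dx) π(y) dy < ∞. -/

import Mathlib

/-
Since `π(y) = (2π)^{-d/2} det(Γ)^{-1/2} Z(y)`, the `y`-integrand is a constant times
`Z(y)^{1-p} ∫ exp(-p Φ(x,y)) μ(dx)`. On the ball where `‖G‖_Γ < L₃` the likelihood is at least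
`exp(-½(‖y‖_Γ + L₃)²)`, so `Z(y)^{1-p} ≤ μ(B)^{1-p} exp(½(p-1)(‖y‖_Γ + L₃)²)`. Writing
`‖y‖_Γ ≤ ‖y - G(x)‖_Γ + ‖G(x)‖_Γ`, using the Lipschitz bound on `‖G(x)‖_Γ` and a weighted Young
inequality, `exp(-p Φ(x,y)) Z(y)^{1-p}` is at most `C exp(-κ‖y - G(x)‖_Γ²) exp(L₂‖x‖²)`, with
`κ > 0` exactly because `p(p-1)L₁² < L₂`. By Tonelli and translation invariance of Lebesgue
measure, the double integral of this bound is a Gaussian integral times `∫ exp(L₂‖x‖²) μ(dx)`.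
-/

open MeasureTheory Real Matrix

/-- `‖z‖_Γ² = zᵀ Γ⁻¹ z` for `z ∈ ℝ^d`. -/
noncomputable def normGammaSq {d : ℕ} (Γ : Matrix (Fin d) (Fin d) ℝ) (z : Fin d → ℝ) : ℝ :=
  z ⬝ᵥ (Γ⁻¹ *ᵥ z)

/-- `‖z‖_Γ = sqrt(zᵀ Γ⁻¹ z)`. -/
noncomputable def normGamma {d : ℕ} (Γ : Matrix (Fin d) (Fin d) ℝ) (z : Fin d → ℝ) : ℝ :=
  Real.sqrt (normGammaSq Γ z)

/-- Gaussian likelihood density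
`π(y|x) = (2π)^{-d/2} det(Γ)^{-1/2} exp(-½‖G(x)-y‖_Γ²)`. -/
noncomputable def gaussLikelihood {d : ℕ} (Γ : Matrix (Fin d) (Fin d) ℝ) {X : Type*}
    (G : X → (Fin d → ℝ)) (x : X) (y : Fin d → ℝ) : ℝ :=
  (Real.sqrt ((2 * Real.pi) ^ d * Γ.det))⁻¹ *
    Real.exp (-(1 / 2) * normGammaSq Γ (G x - y))

/-- Evidence density `π(y) = ∫_X π(y|x) μ(dx)`. -/
noncomputable def evidenceDensity {d : ℕ} (Γ : Matrix (Fin d) (Fin d) ℝ) {X : Type*}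
    [MeasurableSpace X] (μ : Measure X) (G : X → (Fin d → ℝ)) (y : Fin d → ℝ) : ℝ :=
  ∫ x, gaussLikelihood Γ G x y ∂μ

open scoped ENNReal

lemma add_sq_le_sq_div_add_sq_div {a b t : ℝ} (ht₀ : 0 < t) (ht₁ : t < 1) :
    (a + b) ^ 2 ≤ a ^ 2 / (1 - t) + b ^ 2 / t := by
  have h₁ : 0 < 1 - t := sub_pos.2 ht₁
  rw [div_add_div _ _ h₁.ne' ht₀.ne', le_div_iff₀ (mul_pos h₁ ht₀)]
  nlinarith [sq_nonneg (t * a - (1 - t) * b)]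

lemma abs_div_rpow_mul_le {f Z b p : ℝ} (hf : 0 ≤ f) (hb : 0 < b) (hbZ : b ≤ Z) (hp : 1 ≤ p) :
    |f / Z| ^ p * Z ≤ f ^ p * b ^ (1 - p) := by
  have hZ : 0 < Z := hb.trans_le hbZ
  calc |f / Z| ^ p * Z = f ^ p * Z ^ (1 - p) := by
        rw [abs_of_nonneg (div_nonneg hf hZ.le), div_rpow hf hZ.le, rpow_sub hZ, rpow_one]
        field_simp
    _ ≤ f ^ p * b ^ (1 - p) :=
        mul_le_mul_of_nonneg_left (rpow_le_rpow_of_nonpos hb hbZ (by linarith)) (rpow_nonneg hf _)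

lemma exists_neg_mul_sq_add_mul_sq_le {p L₁ L₂ K : ℝ} (hp : 1 < p) (hL₁ : 0 < L₁) (hL₂ : 0 < L₂)
    (hL : L₁ ^ 2 < L₂ / (p * (p - 1))) :
    ∃ κ > 0, ∃ C, ∀ r s u : ℝ, 0 ≤ s → s ≤ r + (L₁ * u + K) →
      -(p / 2) * r ^ 2 + (p - 1) / 2 * s ^ 2 ≤ -κ * r ^ 2 + L₂ * u ^ 2 + C := by
  -- the Young weight for which the coefficient of `u²` comes out as exactly `L₂`
  set θ := (p - 1) * L₁ ^ 2 / L₂ with hθ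
  have hp₁ : 0 < p - 1 := sub_pos.2 hp
  have hθ₀ : 0 < θ := by positivity
  have hpθ : p * θ < 1 := by
    rw [lt_div_iff₀ (by positivity)] at hL
    rw [hθ, ← mul_div_assoc, div_lt_one hL₂]
    linarith
  have hθ₁ : θ < 1 := by nlinarith
  refine ⟨(p - (p - 1) / (1 - θ)) / 2, ?_, (p - 1) / θ * K ^ 2, fun r s u hs hsr => ?_⟩
  · have : (p - 1) / (1 - θ) < p := by rw [div_lt_iff₀ (by linarith)]; linarith
    linarith
  have hsq : s ^ 2 ≤ r ^ 2 / (1 - θ) + 2 * ((L₁ * u) ^ 2 + K ^ 2) / θ := by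
    calc s ^ 2 ≤ (r + (L₁ * u + K)) ^ 2 := pow_le_pow_left₀ hs hsr 2
      _ ≤ r ^ 2 / (1 - θ) + (L₁ * u + K) ^ 2 / θ := add_sq_le_sq_div_add_sq_div hθ₀ hθ₁
      _ ≤ r ^ 2 / (1 - θ) + 2 * ((L₁ * u) ^ 2 + K ^ 2) / θ := by gcongr; exact add_sq_le
  have hL₂θ : (p - 1) / θ * L₁ ^ 2 = L₂ := by rw [hθ]; field_simp
  have hid : -(p / 2) * r ^ 2 + (p - 1) / 2 * (r ^ 2 / (1 - θ) + 2 * ((L₁ * u) ^ 2 + K ^ 2) / θ)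
      = -((p - (p - 1) / (1 - θ)) / 2) * r ^ 2 + L₂ * u ^ 2 + (p - 1) / θ * K ^ 2 := by
    rw [← hL₂θ]
    field_simp
    ring
  linarith [mul_le_mul_of_nonneg_left hsq (by linarith : (0 : ℝ) ≤ (p - 1) / 2)]

lemma integrable_exp_neg_mul_sq_norm {E : Type*} [NormedAddCommGroup E] [NormedSpace ℝ E]
    [FiniteDimensional ℝ E] [MeasurableSpace E] [BorelSpace E] (μ : Measure E)
    [μ.IsAddHaarMeasure] {b : ℝ} (hb : 0 < b) :
    Integrable (fun x => exp (-b * ‖x‖ ^ 2)) μ := by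
  rcases subsingleton_or_nontrivial E with hE | hE
  · exact Integrable.of_finite
  rw [integrable_fun_norm_addHaar μ (f := fun t => exp (-b * t ^ 2))]
  refine (integrableOn_rpow_mul_exp_neg_mul_sq hb (s := (Module.finrank ℝ E - 1 : ℕ))
    (neg_one_lt_zero.trans_le (Nat.cast_nonneg _))).congr_fun (fun t _ => ?_) measurableSet_Ioi
  simp only [rpow_natCast, smul_eq_mul]

lemma Matrix.PosDef.exists_pos_mul_sq_norm_le {n : Type*} [Fintype n] {M : Matrix n n ℝ}
    (hM : M.PosDef) : ∃ c > 0, ∀ z : n → ℝ, c * ‖z‖ ^ 2 ≤ z ⬝ᵥ M *ᵥ z := by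
  rcases isEmpty_or_nonempty n with hn | hn
  · exact ⟨1, one_pos, fun z => by simp [Subsingleton.elim z 0]⟩
  have hq : Continuous fun z : n → ℝ => z ⬝ᵥ M *ᵥ z := by fun_prop
  obtain ⟨w, hw, hmin⟩ := (isCompact_sphere (0 : n → ℝ) 1).exists_isMinOn
    (NormedSpace.sphere_nonempty.2 zero_le_one) hq.continuousOn
  have hw₀ : w ≠ 0 := by rintro rfl; simp at hw
  refine ⟨_, by simpa using hM.dotProduct_mulVec_pos hw₀, fun z => ?_⟩
  rcases eq_or_ne z 0 with rfl | hz
  · simp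
  have hz' : ‖z‖ ≠ 0 := norm_ne_zero_iff.2 hz
  have h : w ⬝ᵥ M *ᵥ w ≤ (‖z‖⁻¹ • z) ⬝ᵥ M *ᵥ (‖z‖⁻¹ • z) :=
    hmin (show ‖z‖⁻¹ • z ∈ Metric.sphere (0 : n → ℝ) 1 by simp [norm_smul, hz'])
  simp only [mulVec_smul, dotProduct_smul, smul_dotProduct, smul_eq_mul] at h
  calc w ⬝ᵥ M *ᵥ w * ‖z‖ ^ 2 ≤ ‖z‖⁻¹ * (‖z‖⁻¹ * (z ⬝ᵥ M *ᵥ z)) * ‖z‖ ^ 2 := by gcongr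
    _ = z ⬝ᵥ M *ᵥ z := by field_simp

lemma lintegral_lintegral_mul_comp_sub {X E : Type*} [MeasurableSpace X] [MeasurableSpace E]
    [AddGroup E] [MeasurableAdd E] [MeasurableSub₂ E] {μ : Measure X} {ν : Measure E} [SFinite μ]
    [SFinite ν] [ν.IsAddRightInvariant] {φ : E → ℝ≥0∞} {ψ : X → ℝ≥0∞} {h : X → E}
    (hφ : Measurable φ) (hψ : Measurable ψ) (hh : Measurable h) :
    ∫⁻ y, ∫⁻ x, φ (y - h x) * ψ x ∂μ ∂ν = (∫⁻ y, φ y ∂ν) * ∫⁻ x, ψ x ∂μ := by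
  rw [← lintegral_lintegral_swap (by fun_prop), ← lintegral_const_mul _ hψ]
  refine lintegral_congr fun x => ?_
  rw [lintegral_mul_const _ (by fun_prop), lintegral_sub_right_eq_self φ (h x)]

section GammaNorm

variable {d : ℕ} {Γ : Matrix (Fin d) (Fin d) ℝ}

lemma normGamma_eq_norm (hΓ : Γ.PosDef) (z : Fin d → ℝ) :
    normGamma Γ z = @norm _ (Γ⁻¹.toSeminormedAddCommGroup hΓ.inv.posSemidef).toNorm z := by
  change √(z ⬝ᵥ Γ⁻¹ *ᵥ z) = √(RCLike.re ((Γ⁻¹ *ᵥ z) ⬝ᵥ star z))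
  rw [dotProduct_comm, star_trivial]
  rfl

lemma normGamma_add_le (hΓ : Γ.PosDef) (u v : Fin d → ℝ) :
    normGamma Γ (u + v) ≤ normGamma Γ u + normGamma Γ v := by
  simp only [normGamma_eq_norm hΓ]
  exact @norm_add_le _ (Γ⁻¹.toSeminormedAddCommGroup hΓ.inv.posSemidef).toSeminormedAddGroup u v

variable (Γ) in
lemma normGamma_neg (z : Fin d → ℝ) :
    normGamma Γ (-z) = normGamma Γ z := by
  simp only [normGamma, normGammaSq, mulVec_neg, dotProduct_neg, neg_dotProduct, neg_neg]

lemma normGamma_sub_le (hΓ : Γ.PosDef) (u v : Fin d → ℝ) :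
    normGamma Γ (u - v) ≤ normGamma Γ u + normGamma Γ v := by
  simpa [sub_eq_add_neg, normGamma_neg] using normGamma_add_le hΓ u (-v)

lemma normGamma_le_sub_add (hΓ : Γ.PosDef) (u v : Fin d → ℝ) :
    normGamma Γ u ≤ normGamma Γ (u - v) + normGamma Γ v := by
  simpa using normGamma_add_le hΓ (u - v) v

variable (Γ) in
lemma normGammaSq_sub_comm (u v : Fin d → ℝ) :
    normGammaSq Γ (u - v) = normGammaSq Γ (v - u) := by
  simp only [normGammaSq, ← neg_sub v u, mulVec_neg, dotProduct_neg, neg_dotProduct, neg_neg]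

lemma normGammaSq_nonneg (hΓ : Γ.PosDef) (z : Fin d → ℝ) : 0 ≤ normGammaSq Γ z := by
  simpa [normGammaSq] using hΓ.inv.posSemidef.dotProduct_mulVec_nonneg z

lemma sq_normGamma (hΓ : Γ.PosDef) (z : Fin d → ℝ) : normGamma Γ z ^ 2 = normGammaSq Γ z :=
  sq_sqrt (normGammaSq_nonneg hΓ z)

variable (Γ) in
lemma continuous_normGammaSq : Continuous (normGammaSq Γ) := by
  unfold normGammaSq
  fun_prop

lemma integrable_exp_neg_mul_normGammaSq (hΓ : Γ.PosDef) {κ : ℝ} (hκ : 0 < κ) :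
    Integrable fun y => exp (-κ * normGammaSq Γ y) := by
  obtain ⟨c, hc, hcoer⟩ := hΓ.inv.exists_pos_mul_sq_norm_le
  refine (integrable_exp_neg_mul_sq_norm volume (mul_pos hκ hc)).mono'
    ((continuous_normGammaSq Γ).const_mul _).rexp.aestronglyMeasurable (ae_of_all _ fun y => ?_)
  rw [norm_of_nonneg (exp_pos _).le, exp_le_exp, neg_mul, neg_mul, neg_le_neg_iff, mul_assoc]
  exact mul_le_mul_of_nonneg_left (hcoer y) hκ.le

section Evidence

variable {X : Type*} [MeasurableSpace X]

/-- The potential `Φ(x, y)`. -/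
noncomputable def gaussPotential (Γ : Matrix (Fin d) (Fin d) ℝ) (G : X → (Fin d → ℝ)) (x : X)
    (y : Fin d → ℝ) : ℝ :=
  1 / 2 * normGammaSq Γ (G x - y)

/-- The normalising constant `Z(y)`. -/
noncomputable def normalizingConstant (Γ : Matrix (Fin d) (Fin d) ℝ) (μ : Measure X)
    (G : X → (Fin d → ℝ)) (y : Fin d → ℝ) : ℝ :=
  ∫ x, exp (-gaussPotential Γ G x y) ∂μ

lemma evidenceDensity_eq_mul_normalizingConstant (μ : Measure X) (G : X → (Fin d → ℝ))
    (y : Fin d → ℝ) :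
    evidenceDensity Γ μ G y = (√((2 * π) ^ d * Γ.det))⁻¹ * normalizingConstant Γ μ G y := by
  simp only [evidenceDensity, gaussLikelihood, normalizingConstant, gaussPotential, neg_mul,
    integral_const_mul]

lemma integrable_exp_neg_gaussPotential (hΓ : Γ.PosDef) {μ : Measure X} [IsFiniteMeasure μ]
    {G : X → (Fin d → ℝ)} (hG : Measurable G) (y : Fin d → ℝ) :
    Integrable (fun x => exp (-gaussPotential Γ G x y)) μ := by
  refine (integrable_const 1).mono' ?_ (ae_of_all _ fun x => ?_)
  · exact (((continuous_normGammaSq Γ).measurable.comp (hG.sub_const y)).const_mul _).neg.exp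
      |>.aestronglyMeasurable
  · rw [norm_of_nonneg (exp_pos _).le, exp_le_one_iff, neg_nonpos, gaussPotential]
    exact mul_nonneg (by norm_num) (normGammaSq_nonneg hΓ _)

lemma measureReal_mul_exp_le_normalizingConstant (hΓ : Γ.PosDef) {μ : Measure X}
    [IsFiniteMeasure μ] {G : X → (Fin d → ℝ)} (hG : Measurable G) {s : Set X}
    (hs : MeasurableSet s) {L : ℝ} (hGs : ∀ x ∈ s, normGamma Γ (G x) ≤ L) (y : Fin d → ℝ) :
    μ.real s * exp (-(1 / 2 * (normGamma Γ y + L) ^ 2)) ≤ normalizingConstant Γ μ G y := by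
  have hint := integrable_exp_neg_gaussPotential hΓ hG (μ := μ) y
  have hle : ∀ x ∈ s, exp (-(1 / 2 * (normGamma Γ y + L) ^ 2)) ≤ exp (-gaussPotential Γ G x y) := by
    intro x hx
    rw [exp_le_exp, neg_le_neg_iff, gaussPotential, ← sq_normGamma hΓ]
    gcongr
    · exact sqrt_nonneg _
    · calc normGamma Γ (G x - y) ≤ normGamma Γ (G x) + normGamma Γ y := normGamma_sub_le hΓ _ _
        _ ≤ normGamma Γ y + L := by linarith [hGs x hx]
  calc μ.real s * exp (-(1 / 2 * (normGamma Γ y + L) ^ 2))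
      ≤ ∫ x in s, exp (-gaussPotential Γ G x y) ∂μ := by
        rw [mul_comm]
        exact setIntegral_ge_of_const_le_real hs (measure_ne_top μ s) hle hint.integrableOn
    _ ≤ normalizingConstant Γ μ G y :=
        setIntegral_le_integral hint (ae_of_all _ fun x => (exp_pos _).le)

lemma abs_exp_neg_gaussPotential_div_rpow_mul_le (hΓ : Γ.PosDef) {μ : Measure X}
    {G : X → (Fin d → ℝ)} {p m L : ℝ} (hp : 1 ≤ p) (hm : 0 < m) (x : X) {y : Fin d → ℝ}
    (hZ : m * exp (-(1 / 2 * (normGamma Γ y + L) ^ 2)) ≤ normalizingConstant Γ μ G y) :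
    |exp (-gaussPotential Γ G x y) / normalizingConstant Γ μ G y| ^ p * normalizingConstant Γ μ G y
      ≤ m ^ (1 - p) * exp (-(p / 2) * normGamma Γ (y - G x) ^ 2
        + (p - 1) / 2 * (normGamma Γ y + L) ^ 2) := by
  calc _ ≤ exp (-gaussPotential Γ G x y) ^ p
          * (m * exp (-(1 / 2 * (normGamma Γ y + L) ^ 2))) ^ (1 - p) :=
        abs_div_rpow_mul_le (exp_pos _).le (by positivity) hZ hp
    _ = _ := by
        rw [mul_rpow hm.le (exp_pos _).le, ← exp_mul, ← exp_mul, mul_left_comm, ← exp_add,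
          gaussPotential, normGammaSq_sub_comm, ← sq_normGamma hΓ]
        ring_nf

end Evidence

lemma exists_abs_exp_neg_gaussPotential_div_rpow_mul_evidenceDensity_le {X : Type*}
    [NormedAddCommGroup X] [MeasurableSpace X] [OpensMeasurableSpace X] (μ : Measure X)
    [IsFiniteMeasure μ] (hΓ : Γ.PosDef) {G : X → (Fin d → ℝ)} (hG : Measurable G)
    {L₁ L₂ R L₃ : ℝ} {x₀ : X} (hL₁ : 0 < L₁) (hL₂ : 0 < L₂) (hR : 0 < R) (hL₃ : 0 < L₃)
    (hLip : ∀ x x', normGamma Γ (G x - G x') ≤ L₁ * ‖x - x'‖)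
    (hBall : 0 < μ (Metric.ball x₀ R)) (hBdd : ∀ x ∈ Metric.ball x₀ R, normGamma Γ (G x) < L₃)
    {p : ℝ} (hp : 1 < p) (hL : L₁ ^ 2 < L₂ / (p * (p - 1))) :
    ∃ κ > 0, ∃ C, ∀ x y,
      |exp (-gaussPotential Γ G x y) / normalizingConstant Γ μ G y| ^ p * evidenceDensity Γ μ G y
        ≤ C * exp (-κ * normGammaSq Γ (y - G x)) * exp (L₂ * ‖x‖ ^ 2) := by
  obtain ⟨κ, hκ, C, hC⟩ := exists_neg_mul_sq_add_mul_sq_le (K := L₁ * ‖x₀‖ + 2 * L₃) hp hL₁ hL₂ hL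
  set m := μ.real (Metric.ball x₀ R)
  have hm : 0 < m := ENNReal.toReal_pos hBall.ne' (measure_ne_top _ _)
  refine ⟨κ, hκ, (√((2 * π) ^ d * Γ.det))⁻¹ * m ^ (1 - p) * exp C, fun x y => ?_⟩
  have hZ := measureReal_mul_exp_le_normalizingConstant hΓ hG measurableSet_ball
    (fun x hx => (hBdd x hx).le) (μ := μ) y
  have hGx : normGamma Γ (G x) + L₃ ≤ L₁ * ‖x‖ + (L₁ * ‖x₀‖ + 2 * L₃) := by
    have hx₀ := hBdd x₀ (Metric.mem_ball_self hR)
    have := mul_le_mul_of_nonneg_left (norm_sub_le x x₀) hL₁.le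
    linarith [normGamma_le_sub_add hΓ (G x) (G x₀), hLip x x₀]
  have hexp := hC (normGamma Γ (y - G x)) (normGamma Γ y + L₃) ‖x‖
    (add_nonneg (sqrt_nonneg _) hL₃.le) (by linarith [normGamma_le_sub_add hΓ y (G x)])
  rw [evidenceDensity_eq_mul_normalizingConstant, mul_left_comm]
  calc _ ≤ (√((2 * π) ^ d * Γ.det))⁻¹ * (m ^ (1 - p) * exp (-(p / 2) * normGamma Γ (y - G x) ^ 2
        + (p - 1) / 2 * (normGamma Γ y + L₃) ^ 2)) :=
        mul_le_mul_of_nonneg_left (abs_exp_neg_gaussPotential_div_rpow_mul_le hΓ hp.le hm x hZ)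
          (by positivity)
    _ ≤ (√((2 * π) ^ d * Γ.det))⁻¹ * (m ^ (1 - p) * exp (-κ * normGamma Γ (y - G x) ^ 2
        + L₂ * ‖x‖ ^ 2 + C)) := by gcongr
    _ = _ := by
        rw [sq_normGamma hΓ, exp_add, exp_add]
        ring

end GammaNorm

theorem likelihood_evidence_ratio_moment_finite_general {d : ℕ}
    {X : Type*} [NormedAddCommGroup X] [MeasurableSpace X] [BorelSpace X]
    (μ : Measure X) [IsProbabilityMeasure μ]
    (Γ : Matrix (Fin d) (Fin d) ℝ) (hΓ_pd : Γ.PosDef)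
    (G : X → (Fin d → ℝ)) (hG_meas : Measurable G)
    (L₁ L₂ R L₃ : ℝ) (x₀ : X)
    (hL₁ : 0 < L₁) (hL₂ : 0 < L₂) (hR : 0 < R) (hL₃ : 0 < L₃)
    (hLip : ∀ x x' : X, normGamma Γ (G x - G x') ≤ L₁ * ‖x - x'‖)
    (hSubGauss : Integrable (fun x => Real.exp (L₂ * ‖x‖ ^ 2)) μ)
    (hBall : 0 < μ (Metric.ball x₀ R))
    (hBdd : ∀ x ∈ Metric.ball x₀ R, normGamma Γ (G x) < L₃)
    (p : ℝ) (hp : 1 < p) (hL : L₁ ^ 2 < L₂ / (p * (p - 1))) :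
    ∫⁻ y, (∫⁻ x, ENNReal.ofReal
            (|Real.exp (-((1 / 2) * normGammaSq Γ (G x - y)))
              / (∫ x', Real.exp (-((1 / 2) * normGammaSq Γ (G x' - y))) ∂μ)| ^ p) ∂μ)
          * ENNReal.ofReal (evidenceDensity Γ μ G y)
      < ⊤ := by
  obtain ⟨κ, hκ, C, hbound⟩ :=
    exists_abs_exp_neg_gaussPotential_div_rpow_mul_evidenceDensity_le μ hΓ_pd hG_meas
      hL₁ hL₂ hR hL₃ hLip hBall hBdd hp hL
  have hφ : Measurable fun z => ENNReal.ofReal (C * exp (-κ * normGammaSq Γ z)) := by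
    have := (continuous_normGammaSq Γ).measurable
    fun_prop
  have hψ : Measurable fun x : X => ENNReal.ofReal (exp (L₂ * ‖x‖ ^ 2)) := by fun_prop
  calc _ ≤ ∫⁻ y, ∫⁻ x, ENNReal.ofReal (C * exp (-κ * normGammaSq Γ (y - G x)))
          * ENNReal.ofReal (exp (L₂ * ‖x‖ ^ 2)) ∂μ := by
        refine lintegral_mono fun y => ?_
        rw [← lintegral_mul_const' _ _ ENNReal.ofReal_ne_top]
        refine lintegral_mono fun x => ?_
        rw [← ENNReal.ofReal_mul (by positivity), ← ENNReal.ofReal_mul' (exp_pos _).le]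
        exact ENNReal.ofReal_le_ofReal (hbound x y)
    _ = (∫⁻ z, ENNReal.ofReal (C * exp (-κ * normGammaSq Γ z)))
          * ∫⁻ x, ENNReal.ofReal (exp (L₂ * ‖x‖ ^ 2)) ∂μ :=
        lintegral_lintegral_mul_comp_sub hφ hψ hG_meas
    _ < ⊤ := ENNReal.mul_lt_top
        ((integrable_exp_neg_mul_normGammaSq hΓ_pd hκ).const_mul C).lintegral_lt_top
        hSubGauss.lintegral_lt_top

/-- Under Assumption A, if `p > 1` and `L₁² < L₂/(p(p-1))`, then
`∫_{ℝ^d} ∫_X |exp(-Φ(x,y))/Z(y)|^p μ(dx) π(y) dy < ∞`, where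
`Φ(x,y) = ½‖G(x)-y‖_Γ²`, `Z(y) = ∫ exp(-Φ(x,y)) μ(dx)` and `π` is the evidence density. -/
theorem likelihood_evidence_ratio_moment_finite {d : ℕ}
    {X : Type*} [NormedAddCommGroup X] [NormedSpace ℝ X] [CompleteSpace X]
    [TopologicalSpace.SeparableSpace X] [MeasurableSpace X] [BorelSpace X]
    (μ : Measure X) [IsProbabilityMeasure μ]
    (Γ : Matrix (Fin d) (Fin d) ℝ) (hΓ_symm : Γ.IsSymm) (hΓ_pd : Γ.PosDef)
    (G : X → (Fin d → ℝ)) (hG_meas : Measurable G)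
    (L₁ L₂ R L₃ : ℝ) (x₀ : X)
    (hL₁ : 0 < L₁) (hL₂ : 0 < L₂) (hR : 0 < R) (hL₃ : 0 < L₃)
    (hLip : ∀ x x' : X, normGamma Γ (G x - G x') ≤ L₁ * ‖x - x'‖)
    (hSubGauss : Integrable (fun x => Real.exp (L₂ * ‖x‖ ^ 2)) μ)
    (hBall : 0 < μ (Metric.ball x₀ R))
    (hBdd : ∀ x ∈ Metric.ball x₀ R, normGamma Γ (G x) < L₃)
    (p : ℝ) (hp : 1 < p) (hL : L₁ ^ 2 < L₂ / (p * (p - 1))) :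
    ∫⁻ y, (∫⁻ x, ENNReal.ofReal
            (|Real.exp (-((1 / 2) * normGammaSq Γ (G x - y)))
              / (∫ x', Real.exp (-((1 / 2) * normGammaSq Γ (G x' - y))) ∂μ)| ^ p) ∂μ)
          * ENNReal.ofReal (evidenceDensity Γ μ G y)
      < ⊤ :=
  likelihood_evidence_ratio_moment_finite_general μ Γ hΓ_pd G hG_meas L₁ L₂ R L₃ x₀ hL₁ hL₂ hR hL₃
    hLip hSubGauss hBall hBdd p hp hL
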